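/- Let 1 < α ≤ 2, 0 ≤ β ≤ α - 1, a < b, K > 0, and let f : [a,b] × ℝ → ℝ be continuous with |f(t,u₁) - f(t,u₂)| ≤ K|u₁ - u₂| for all t ∈ [a,b] and u₁, u₂ ∈ ℝ. If b - a < ((α-β)^α Γ(α+1)/(K(α-1)^(α-1)))^(1/α), then there exists a unique continuous u : [a,b] → ℝ with u(t) = ∫ₐᵇ G(t,s) f(s,u(s)) ds for all t ∈ [a,b]. -/

import Mathlib

noncomputable def G (a b α β t s : ℝ) : ℝ :=
  if s ≤ t then
    (1 / Real.Gamma α) *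
      ((t - a) ^ (α - 1) * (b - s) ^ (α - 1 - β) / (b - a) ^ (α - 1 - β) -
        (t - s) ^ (α - 1))
  else
    (1 / Real.Gamma α) *
      ((t - a) ^ (α - 1) * (b - s) ^ (α - 1 - β) / (b - a) ^ (α - 1 - β))

/-!
The right-hand side defines a map on `C([a, b], ℝ)` whose Lipschitz constant is at most
`K · sup_t ∫ₐᵇ |G(t, s)| ds`. The kernel `G` is nonnegative on the square, and integrating it
explicitly gives `∫ₐᵇ G(t, s) ds = ((b - a)/(α - β) · (t - a)^(α-1) - (t - a)^α/α) / Γ(α)`, which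
Young's inequality bounds by `(α - 1)^(α-1) (b - a)^α / ((α - β)^α Γ(α + 1))`. The hypothesis on
`b - a` makes `K` times this bound less than one, so Banach's fixed point theorem applies.
-/

open Set Function intervalIntegral

section Hammerstein

variable {a b K C : ℝ} {k f : ℝ → ℝ → ℝ} (hab : a ≤ b)
  (hk : Continuous fun p : ℝ × ℝ => k p.1 p.2) (hf : Continuous fun p : ℝ × ℝ => f p.1 p.2)

include hk hf in
theorem continuous_hammerstein_integrand (u : C(Icc a b, ℝ)) :
    Continuous fun p : ℝ × ℝ => k p.1 p.2 * f p.2 (IccExtend hab u p.2) := by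
  have hu : Continuous (IccExtend hab u) := u.continuous.Icc_extend'
  exact hk.mul (hf.comp (continuous_snd.prodMk (hu.comp continuous_snd)))

noncomputable def hammersteinMap (u : C(Icc a b, ℝ)) : C(Icc a b, ℝ) where
  toFun t := ∫ s in a..b, k t s * f s (IccExtend hab u s)
  continuous_toFun :=
    (continuous_parametric_intervalIntegral_of_continuous'
      (f := fun t s => k t s * f s (IccExtend hab u s))
      (continuous_hammerstein_integrand hab hk hf u) a b).comp continuous_subtype_val

theorem hammersteinMap_apply_of_eqOn {u : C(Icc a b, ℝ)} {v : ℝ → ℝ}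
    (hv : ∀ t (ht : t ∈ Icc a b), v t = u ⟨t, ht⟩) (t : Icc a b) :
    hammersteinMap hab hk hf u t = ∫ s in a..b, k t s * f s (v s) := by
  refine integral_congr fun s hs => ?_
  rw [uIcc_of_le hab] at hs
  simp only [IccExtend_of_mem hab u hs, hv s hs]

theorem dist_hammersteinMap_le (hK : 0 ≤ K)
    (hLip : ∀ t ∈ Icc a b, ∀ u₁ u₂ : ℝ, |f t u₁ - f t u₂| ≤ K * |u₁ - u₂|)
    (hC : ∀ t ∈ Icc a b, ∫ s in a..b, |k t s| ≤ C) (u v : C(Icc a b, ℝ)) :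
    dist (hammersteinMap hab hk hf u) (hammersteinMap hab hk hf v) ≤ K * C * dist u v := by
  have : Nonempty (Icc a b) := nonempty_Icc_subtype hab
  have hcont : ∀ (w : C(Icc a b, ℝ)) (t : ℝ), Continuous fun s => k t s * f s (IccExtend hab w s) :=
    fun w t => (continuous_hammerstein_integrand hab hk hf w).comp
      (continuous_const.prodMk continuous_id)
  have hkt : ∀ t : ℝ, Continuous (k t) := fun t => hk.comp (continuous_const.prodMk continuous_id)
  refine ContinuousMap.dist_le_iff_of_nonempty.2 fun t => ?_
  rw [Real.dist_eq]
  calc |hammersteinMap hab hk hf u t - hammersteinMap hab hk hf v t|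
      = |∫ s in a..b, k t s * (f s (IccExtend hab u s) - f s (IccExtend hab v s))| := by
        simp only [hammersteinMap, ContinuousMap.coe_mk, mul_sub]
        rw [integral_sub ((hcont u t).intervalIntegrable a b) ((hcont v t).intervalIntegrable a b)]
    _ ≤ ∫ s in a..b, |k t s| * (K * dist u v) := by
        refine (abs_integral_le_integral_abs hab).trans (integral_mono_on hab ?_ ?_ fun s hs => ?_)
        · simpa only [mul_sub, Pi.sub_apply] using
            ((hcont u t).sub (hcont v t)).abs.intervalIntegrable a b
        · exact ((hkt t).abs.mul continuous_const).intervalIntegrable a b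
        rw [abs_mul]
        refine mul_le_mul_of_nonneg_left ((hLip s hs _ _).trans ?_) (abs_nonneg _)
        refine mul_le_mul_of_nonneg_left ?_ hK
        rw [IccExtend_of_mem hab u hs, IccExtend_of_mem hab v hs, ← Real.dist_eq]
        exact ContinuousMap.dist_apply_le_dist _
    _ = (∫ s in a..b, |k t s|) * (K * dist u v) := integral_mul_const _ _
    _ ≤ K * C * dist u v := by
        nlinarith [hC t t.2, mul_nonneg hK (dist_nonneg (x := u) (y := v))]

include hab hk hf in
theorem existsUnique_hammerstein_solution (hK : 0 ≤ K)
    (hLip : ∀ t ∈ Icc a b, ∀ u₁ u₂ : ℝ, |f t u₁ - f t u₂| ≤ K * |u₁ - u₂|)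
    (hC : ∀ t ∈ Icc a b, ∫ s in a..b, |k t s| ≤ C) (hKC : K * C < 1) :
    ∃! u : ℝ → ℝ, ContinuousOn u (Icc a b) ∧ (∀ t, t ∉ Icc a b → u t = 0) ∧
      ∀ t ∈ Icc a b, u t = ∫ s in a..b, k t s * f s (u s) := by
  have : Nonempty (Icc a b) := nonempty_Icc_subtype hab
  have hΦ : ContractingWith (K * C).toNNReal (hammersteinMap hab hk hf) :=
    ⟨Real.toNNReal_lt_one.2 hKC,
      LipschitzWith.of_dist_le' (dist_hammersteinMap_le hab hk hf hK hLip hC)⟩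
  set u₀ := ContractingWith.fixedPoint _ hΦ
  have hu₀ : hammersteinMap hab hk hf u₀ = u₀ := hΦ.fixedPoint_isFixedPt
  let U : ℝ → ℝ := fun t => if ht : t ∈ Icc a b then u₀ ⟨t, ht⟩ else 0
  have hU : ∀ t (ht : t ∈ Icc a b), U t = u₀ ⟨t, ht⟩ := fun t ht => dif_pos ht
  have hU_out : ∀ t, t ∉ Icc a b → U t = 0 := fun t ht => dif_neg ht
  refine ⟨U, ⟨?_, hU_out, fun t ht => ?_⟩, ?_⟩
  · refine (u₀.continuous.Icc_extend' (h := hab)).continuousOn.congr fun t ht => ?_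
    rw [hU t ht, IccExtend_of_mem hab u₀ ht]
  · rw [hU t ht, ← hu₀, hammersteinMap_apply_of_eqOn hab hk hf hU]
  · rintro v ⟨hv_cont, hv_zero, hv_eq⟩
    let v₀ : C(Icc a b, ℝ) := ⟨(Icc a b).domRestrict v, hv_cont.domRestrict⟩
    have hv₀ : v₀ = u₀ := hΦ.fixedPoint_unique <| ContinuousMap.ext fun t => by
      rw [hammersteinMap_apply_of_eqOn hab hk hf (v := v) fun _ _ => rfl, ← hv_eq t t.2]
      rfl
    funext t
    by_cases ht : t ∈ Icc a b
    · rw [hU t ht, ← hv₀]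
      rfl
    · rw [hv_zero t ht, hU_out t ht]

end Hammerstein

theorem integral_sub_rpow {r : ℝ} (hr : -1 < r) (a b c : ℝ) :
    ∫ s in a..b, (c - s) ^ r = ((c - a) ^ (r + 1) - (c - b) ^ (r + 1)) / (r + 1) := by
  rw [integral_comp_sub_left (fun x => x ^ r), integral_rpow (Or.inl hr)]

section GreenFunction

variable {a b α β : ℝ}

theorem continuous_G (hα : 1 < α) (hβα : β ≤ α - 1) :
    Continuous fun p : ℝ × ℝ => G a b α β p.1 p.2 := by
  have h₁ : 0 ≤ α - 1 := by linarith
  have h₂ : 0 ≤ α - 1 - β := by linarith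
  refine Continuous.if_le (by fun_prop (disch := assumption)) (by fun_prop (disch := assumption))
    continuous_snd continuous_fst fun p hp => ?_
  rw [hp, sub_self, Real.zero_rpow (by linarith), sub_zero]

theorem G_nonneg (hα : 1 < α) (hβ : 0 ≤ β) (hβα : β ≤ α - 1) (hab : a < b) {t s : ℝ}
    (ht : t ∈ Icc a b) (hs : s ∈ Icc a b) : 0 ≤ G a b α β t s := by
  have hΓ : 0 < 1 / Real.Gamma α := one_div_pos.2 (Real.Gamma_pos_of_pos (by linarith))
  have hta : 0 ≤ t - a := by linarith [ht.1]
  have hbs : 0 ≤ b - s := by linarith [hs.2]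
  unfold G
  split_ifs with hst
  · refine mul_nonneg hΓ.le (sub_nonneg.2 ?_)
    set r := (b - s) / (b - a)
    have hr₀ : 0 ≤ r := div_nonneg hbs (by linarith)
    have hr₁ : r ≤ 1 := (div_le_one (by linarith)).2 (by linarith [hs.1])
    -- (t - a)(b - s) - (t - s)(b - a) = (s - a)(b - t) ≥ 0
    have hts : t - s ≤ (t - a) * r := by
      rw [mul_div_assoc', le_div_iff₀ (by linarith)]
      nlinarith [mul_nonneg (sub_nonneg.2 hs.1) (sub_nonneg.2 ht.2)]
    calc (t - s) ^ (α - 1) ≤ ((t - a) * r) ^ (α - 1) :=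
          Real.rpow_le_rpow (by linarith) hts (by linarith)
      _ = (t - a) ^ (α - 1) * r ^ (α - 1) := Real.mul_rpow hta hr₀
      _ ≤ (t - a) ^ (α - 1) * r ^ (α - 1 - β) :=
          mul_le_mul_of_nonneg_left
            (Real.rpow_le_rpow_of_exponent_ge' hr₀ hr₁ (by linarith) (by linarith))
            (Real.rpow_nonneg hta _)
      _ = (t - a) ^ (α - 1) * (b - s) ^ (α - 1 - β) / (b - a) ^ (α - 1 - β) := by
          rw [Real.div_rpow hbs (by linarith), mul_div_assoc']
  · have := Real.rpow_nonneg hta (α - 1)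
    have := Real.rpow_nonneg hbs (α - 1 - β)
    positivity

theorem integral_G (hα : 1 < α) (hβα : β ≤ α - 1) (hab : a < b) {t : ℝ} (ht : t ∈ Icc a b) :
    ∫ s in a..b, G a b α β t s =
      ((b - a) / (α - β) * (t - a) ^ (α - 1) - (t - a) ^ α / α) / Real.Gamma α := by
  set c := (t - a) ^ (α - 1) / ((b - a) ^ (α - 1 - β) * Real.Gamma α)
  have hG : Continuous (G a b α β t) :=
    (continuous_G hα hβα).comp (continuous_const.prodMk continuous_id)
  have h_left : EqOn (G a b α β t)
      (fun s => c * (b - s) ^ (α - 1 - β) - (Real.Gamma α)⁻¹ * (t - s) ^ (α - 1)) (uIcc a t) := by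
    intro s hs
    rw [uIcc_of_le ht.1] at hs
    simp only [G, if_pos hs.2, c]
    field_simp
  have h_right : EqOn (G a b α β t) (fun s => c * (b - s) ^ (α - 1 - β)) (uIcc t b) := by
    intro s hs
    rw [uIcc_of_le ht.2] at hs
    rcases hs.1.eq_or_lt with rfl | hts
    · simp only [G, le_refl, if_true, sub_self, Real.zero_rpow (by linarith : α - 1 ≠ 0),
        sub_zero, c]
      field_simp
    · simp only [G, if_neg (not_le.2 hts), c]
      field_simp
  rw [← integral_add_adjacent_intervals (hG.intervalIntegrable a t) (hG.intervalIntegrable t b),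
    integral_congr h_left, integral_congr h_right, integral_sub, integral_const_mul,
    integral_const_mul, integral_const_mul, integral_sub_rpow, integral_sub_rpow,
    integral_sub_rpow]
  · have hΓ : Real.Gamma α ≠ 0 := (Real.Gamma_pos_of_pos (by linarith)).ne'
    have hαβ : α - 1 - β + 1 = α - β := by ring
    rw [sub_self, sub_self, Real.zero_rpow (by linarith), Real.zero_rpow (by linarith),
      Real.rpow_add_one (by linarith : b - a ≠ 0), hαβ, sub_add_cancel]
    have : (b - a) ^ (α - 1 - β) ≠ 0 := (Real.rpow_pos_of_pos (by linarith) _).ne'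
    have : α - β ≠ 0 := by linarith
    simp only [c]
    field_simp
    ring
  all_goals first
    | linarith
    | exact Continuous.intervalIntegrable (by fun_prop (disch := linarith)) _ _

theorem mul_rpow_sub_one_sub_rpow_div_le {α c x : ℝ} (hα : 1 < α) (hc : 0 ≤ c) (hx : 0 ≤ x) :
    c * x ^ (α - 1) - x ^ α / α ≤ (α - 1) ^ (α - 1) * c ^ α / α := by
  have h₁ : 0 < α - 1 := by linarith
  -- Young's inequality for the exponents α / (α - 1) and α, applied to λ x ^ (α - 1) and c / λ
  set lam := (α - 1) ^ (-(α - 1) / α)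
  have hlam : 0 < lam := Real.rpow_pos_of_pos h₁ _
  have hpq : (α / (α - 1)).HolderConjugate α := by
    rw [Real.holderConjugate_iff]
    refine ⟨(lt_div_iff₀ h₁).2 (by linarith), ?_⟩
    field_simp
    ring
  have young := Real.young_inequality_of_nonneg
    (mul_nonneg hlam.le (Real.rpow_nonneg hx (α - 1))) (div_nonneg hc hlam.le) hpq
  have h_prod : lam * x ^ (α - 1) * (c / lam) = c * x ^ (α - 1) := by field_simp
  have h_left : (lam * x ^ (α - 1)) ^ (α / (α - 1)) / (α / (α - 1)) = x ^ α / α := by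
    rw [Real.mul_rpow hlam.le (Real.rpow_nonneg hx _), ← Real.rpow_mul h₁.le,
      ← Real.rpow_mul hx, show -(α - 1) / α * (α / (α - 1)) = -1 by field_simp,
      show (α - 1) * (α / (α - 1)) = α by field_simp, Real.rpow_neg_one]
    field_simp
  have h_right : (c / lam) ^ α = (α - 1) ^ (α - 1) * c ^ α := by
    rw [Real.div_rpow hc hlam.le, ← Real.rpow_mul h₁.le,
      show -(α - 1) / α * α = -(α - 1) by field_simp, Real.rpow_neg h₁.le]
    field_simp
  rw [h_prod, h_left, h_right] at young
  linarith

theorem integral_G_le (hα : 1 < α) (hβα : β ≤ α - 1) (hab : a < b) {t : ℝ}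
    (ht : t ∈ Icc a b) :
    ∫ s in a..b, G a b α β t s ≤
      (α - 1) ^ (α - 1) * (b - a) ^ α / ((α - β) ^ α * Real.Gamma (α + 1)) := by
  have hΓ : 0 < Real.Gamma α := Real.Gamma_pos_of_pos (by linarith)
  have hαβ : 0 < α - β := by linarith
  rw [integral_G hα hβα hab ht, Real.Gamma_add_one (by linarith)]
  calc _ ≤ (α - 1) ^ (α - 1) * ((b - a) / (α - β)) ^ α / α / Real.Gamma α :=
        div_le_div_of_nonneg_right (mul_rpow_sub_one_sub_rpow_div_le hα
          (div_nonneg (by linarith) hαβ.le) (by linarith [ht.1])) hΓ.le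
    _ = _ := by
        have := Real.rpow_pos_of_pos hαβ α
        rw [Real.div_rpow (by linarith) hαβ.le]
        field_simp

end GreenFunction

theorem stmt_12_general (α β a b K : ℝ) (hα : 1 < α) (hβ : 0 ≤ β)
    (hβα : β ≤ α - 1) (hab : a < b) (hK : 0 < K) (f : ℝ → ℝ → ℝ)
    (hf : Continuous fun p : ℝ × ℝ => f p.1 p.2)
    (hLip : ∀ t ∈ Set.Icc a b, ∀ u₁ u₂ : ℝ, |f t u₁ - f t u₂| ≤ K * |u₁ - u₂|)
    (hba : b - a <
      ((α - β) ^ α * Real.Gamma (α + 1) / (K * (α - 1) ^ (α - 1))) ^ (1 / α)) :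
    ∃! u : ℝ → ℝ, ContinuousOn u (Set.Icc a b) ∧
      (∀ t, t ∉ Set.Icc a b → u t = 0) ∧
      ∀ t ∈ Set.Icc a b, u t = ∫ s in a..b, G a b α β t s * f s (u s) := by
  have hαβ : 0 < (α - β) ^ α := Real.rpow_pos_of_pos (by linarith) α
  have hΓ : 0 < Real.Gamma (α + 1) := Real.Gamma_pos_of_pos (by linarith)
  have hKE : 0 < K * (α - 1) ^ (α - 1) := mul_pos hK (Real.rpow_pos_of_pos (by linarith) _)
  have hKC : K * ((α - 1) ^ (α - 1) * (b - a) ^ α / ((α - β) ^ α * Real.Gamma (α + 1))) < 1 := by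
    rw [one_div, Real.lt_rpow_inv_iff_of_pos (by linarith) (by positivity) (by linarith),
      lt_div_iff₀' hKE] at hba
    rw [← mul_div_assoc, div_lt_one (by positivity), ← mul_assoc]
    exact hba
  refine existsUnique_hammerstein_solution hab.le (continuous_G hα hβα) hf hK.le hLip
    (fun t ht => ?_) hKC
  calc ∫ s in a..b, |G a b α β t s| = ∫ s in a..b, G a b α β t s :=
        integral_congr fun s hs =>
          abs_of_nonneg (G_nonneg hα hβ hβα hab ht (by rwa [uIcc_of_le hab.le] at hs))
    _ ≤ _ := integral_G_le hα hβα hab ht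

theorem stmt_12 (α β a b K : ℝ) (hα : 1 < α) (hα2 : α ≤ 2) (hβ : 0 ≤ β)
    (hβα : β ≤ α - 1) (hab : a < b) (hK : 0 < K) (f : ℝ → ℝ → ℝ)
    (hf : Continuous fun p : ℝ × ℝ => f p.1 p.2)
    (hLip : ∀ t ∈ Set.Icc a b, ∀ u₁ u₂ : ℝ, |f t u₁ - f t u₂| ≤ K * |u₁ - u₂|)
    (hba : b - a <
      ((α - β) ^ α * Real.Gamma (α + 1) / (K * (α - 1) ^ (α - 1))) ^ (1 / α)) :
    ∃! u : ℝ → ℝ, ContinuousOn u (Set.Icc a b) ∧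
      (∀ t, t ∉ Set.Icc a b → u t = 0) ∧
      ∀ t ∈ Set.Icc a b, u t = ∫ s in a..b, G a b α β t s * f s (u s) :=
  stmt_12_general α β a b K hα hβ hβα hab hK f hf hLip hba
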